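/- Let (Ω, F, P) be a non-atomic probability space, let X : Ω → ℝ be integrable, let k ≥ 1 be a natural number, and let A ∈ F satisfy P(A) ≤ 1/k. Suppose there is a constant c ≥ 0 such that |X| ≥ c almost everywhere on A and |X| ≤ c almost everywhere on the complement of A. Let A₁, …, A_k ∈ F satisfy P(A_i) ≤ P(A) for each i. Then there exist nonnegative measurable functions U₁, …, U_k and V₁, …, V_k on Ω such that: the U_i have pairwise disjoint supports (U_i·U_j = 0 a.e. for i ≠ j), the V_i have pairwise disjoint supports, U_i ~ |X|·1_A and V_i ~ |X|·1_{A_i} for each i, and V_i ≤ U_i almost everywhere for each i (hence Σ_{i=1}^k V_i ≤ Σ_{i=1}^k U_i a.e.). -/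

import Mathlib

open MeasureTheory ProbabilityTheory Set
open scoped ENNReal

/-- A measure is nonatomic if every measurable set of positive measure admits a measurable
subset of strictly smaller positive measure. -/
def Nonatomic {Ω : Type*} [MeasurableSpace Ω] (μ : Measure Ω) : Prop :=
  ∀ s : Set Ω, MeasurableSet s → 0 < μ s →
    ∃ t, t ⊆ s ∧ MeasurableSet t ∧ 0 < μ t ∧ μ t < μ s

namespace NonatomicAux

variable {Ω : Type*} [MeasurableSpace Ω] {μ : Measure Ω}

lemma half_split (hP : Nonatomic μ) {s : Set Ω} (hs : MeasurableSet s) (h : 0 < μ s)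
    (hfin : μ s ≠ ∞) :
    ∃ t, t ⊆ s ∧ MeasurableSet t ∧ 0 < μ t ∧ μ t ≤ μ s / 2 := by
  obtain ⟨t, hts, htm, ht0, htlt⟩ := hP s hs h
  by_cases hle : μ t ≤ μ s / 2
  · exact ⟨t, hts, htm, ht0, hle⟩
  · push_neg at hle
    refine ⟨s \ t, diff_subset, hs.diff htm, ?_, ?_⟩
    · rw [measure_diff hts htm.nullMeasurableSet (htlt.trans_le le_top).ne]
      exact tsub_pos_of_lt htlt
    · rw [measure_diff hts htm.nullMeasurableSet (htlt.trans_le le_top).ne]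
      refine tsub_le_iff_right.2 ?_
      calc μ s = μ s / 2 + μ s / 2 := (ENNReal.add_halves _).symm
      _ ≤ μ t + μ s / 2 := by gcongr
      _ = μ s / 2 + μ t := add_comm _ _

lemma small_piece (hP : Nonatomic μ) {s : Set Ω} (hs : MeasurableSet s) (h : 0 < μ s)
    (hfin : μ s ≠ ∞) {ε : ℝ≥0∞} (hε : 0 < ε) :
    ∃ t, t ⊆ s ∧ MeasurableSet t ∧ 0 < μ t ∧ μ t ≤ ε := by
  have key : ∀ n : ℕ, ∃ t, t ⊆ s ∧ MeasurableSet t ∧ 0 < μ t ∧ μ t ≤ μ s / 2 ^ n := by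
    intro n
    induction n with
    | zero => exact ⟨s, subset_rfl, hs, h, by simp⟩
    | succ n ih =>
      obtain ⟨t, hts, htm, ht0, htle⟩ := ih
      have htfin : μ t ≠ ∞ := fun htop => hfin (top_le_iff.1 (htop ▸ measure_mono hts))
      obtain ⟨u, hut, hum, hu0, hule⟩ := half_split hP htm ht0 htfin
      refine ⟨u, hut.trans hts, hum, hu0, hule.trans ?_⟩
      have heq : μ s / 2 ^ n / 2 = μ s / 2 ^ (n + 1) := by
        rw [pow_succ, div_eq_mul_inv, div_eq_mul_inv, div_eq_mul_inv, mul_assoc,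
          ← ENNReal.mul_inv (by simp) (by simp)]
      rw [← heq]
      gcongr
  rcases eq_or_ne ε ∞ with rfl | hεtop
  · exact ⟨s, subset_rfl, hs, h, le_top⟩
  · have hde : μ s / ε ≠ ∞ := by
      rw [ne_eq, ENNReal.div_eq_top]
      push_neg
      exact ⟨fun _ => hε.ne', fun hc => absurd hc hfin⟩
    obtain ⟨n, hn⟩ := ENNReal.exists_nat_gt hde
    obtain ⟨t, hts, htm, ht0, htle⟩ := key n
    refine ⟨t, hts, htm, ht0, htle.trans ?_⟩
    have h2n : μ s / ε < (2 : ℝ≥0∞) ^ n := by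
      refine hn.trans_le ?_
      exact_mod_cast Nat.cast_le.2 (Nat.lt_two_pow_self (n := n)).le
    have hlt : μ s < 2 ^ n * ε := by
      rwa [ENNReal.div_lt_iff (Or.inl hε.ne') (Or.inl hεtop)] at h2n
    rw [ENNReal.div_le_iff_le_mul (Or.inl (by positivity)) (Or.inl (by simp))]
    rw [mul_comm ε _]
    exact hlt.le

lemma step (hP : Nonatomic μ) [IsProbabilityMeasure μ] {s t : Set Ω} {r : ℝ≥0∞}
    (hs : MeasurableSet s) (ht : MeasurableSet t) (hts : t ⊆ s) (htr : μ t ≤ r) :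
    ∃ t', t ⊆ t' ∧ t' ⊆ s ∧ MeasurableSet t' ∧ μ t' ≤ r ∧
      ∀ u, u ⊆ s \ t → MeasurableSet u → μ u ≤ r - μ t → μ t + μ u / 2 ≤ μ t' := by
  set b := r - μ t with hb
  set D := ⨆ (u : Set Ω) (_ : u ⊆ s \ t ∧ MeasurableSet u ∧ μ u ≤ b), μ u with hD
  have hDle : ∀ u, u ⊆ s \ t → MeasurableSet u → μ u ≤ b → μ u ≤ D := by
    intro u h1 h2 h3
    exact le_iSup₂ (f := fun (u : Set Ω) (_ : u ⊆ s \ t ∧ MeasurableSet u ∧ μ u ≤ b) => μ u)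
      u ⟨h1, h2, h3⟩
  have hD1 : D ≤ 1 := by
    refine iSup₂_le fun u _ => ?_
    exact (measure_mono (subset_univ u)).trans (by simp)
  -- choose v with μ v ≥ D / 2
  have hv : ∃ v, v ⊆ s \ t ∧ MeasurableSet v ∧ μ v ≤ b ∧ D ≤ 2 * μ v := by
    rcases eq_or_ne D 0 with hD0 | hD0
    · exact ⟨∅, empty_subset _, MeasurableSet.empty, by simp, by simp [hD0]⟩
    · have hhalf : D / 2 < D := ENNReal.half_lt_self hD0 (hD1.trans_lt (by simp)).ne
      rw [hD] at hhalf
      obtain ⟨u, hlt⟩ := lt_iSup_iff.1 hhalf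
      obtain ⟨hu2, hlt2⟩ := lt_iSup_iff.1 hlt
      refine ⟨u, hu2.1, hu2.2.1, hu2.2.2, ?_⟩
      calc D = 2 * (D / 2) := by rw [two_mul, ENNReal.add_halves]
      _ ≤ 2 * μ u := by gcongr
  obtain ⟨v, hvst, hvm, hvb, hvD⟩ := hv
  refine ⟨t ∪ v, subset_union_left, union_subset hts (hvst.trans diff_subset),
    ht.union hvm, ?_, ?_⟩
  · rw [measure_union (Disjoint.mono_right hvst disjoint_sdiff_right) hvm]
    calc μ t + μ v ≤ μ t + b := by gcongr
    _ = r := add_tsub_cancel_of_le htr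
  · intro u hu hum hub
    rw [measure_union (Disjoint.mono_right hvst disjoint_sdiff_right) hvm]
    have h1 : μ u ≤ D := hDle u hu hum hub
    have h2 : μ u / 2 ≤ μ v := by
      rw [ENNReal.div_le_iff_le_mul (Or.inl (by simp)) (Or.inl (by simp))]
      rw [mul_comm]
      exact h1.trans hvD
    gcongr
lemma sierpinski (hP : Nonatomic μ) [IsProbabilityMeasure μ] {s : Set Ω} {r : ℝ≥0∞}
    (hs : MeasurableSet s) (hr : r ≤ μ s) :
    ∃ t, t ⊆ s ∧ MeasurableSet t ∧ μ t = r := by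
  -- iterate the step construction
  let Good : Set Ω → Prop := fun t => t ⊆ s ∧ MeasurableSet t ∧ μ t ≤ r
  have hstep : ∀ t : Set Ω, Good t → ∃ t' : Set Ω, Good t' ∧ t ⊆ t' ∧
      ∀ u, u ⊆ s \ t → MeasurableSet u → μ u ≤ r - μ t → μ t + μ u / 2 ≤ μ t' := by
    intro t ht
    obtain ⟨t', h1, h2, h3, h4, h5⟩ := step hP hs ht.2.1 ht.1 ht.2.2
    exact ⟨t', ⟨h2, h3, h4⟩, h1, h5⟩
  choose g hg1 hg2 hg3 using hstep
  have h0 : Good ∅ := ⟨empty_subset _, MeasurableSet.empty, by simp⟩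
  -- the sequence
  let T : ℕ → {t : Set Ω // Good t} := fun n =>
    (fun x : {t : Set Ω // Good t} => (⟨g x.1 x.2, hg1 x.1 x.2⟩ : {t : Set Ω // Good t}))^[n]
      ⟨∅, h0⟩
  have hTsucc : ∀ n, (T (n+1)).1 = g (T n).1 (T n).2 := by
    intro n
    simp only [T, Function.iterate_succ_apply']
  have hTmono : ∀ n, (T n).1 ⊆ (T (n+1)).1 := by
    intro n; rw [hTsucc n]; exact hg2 _ _
  have hTmono' : Monotone fun n => (T n).1 :=
    monotone_nat_of_le_succ hTmono
  set W := ⋃ n, (T n).1 with hW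
  have hWm : MeasurableSet W := MeasurableSet.iUnion fun n => (T n).2.2.1
  have hWs : W ⊆ s := iUnion_subset fun n => (T n).2.1
  have hWμ : μ W = ⨆ n, μ (T n).1 := Directed.measure_iUnion hTmono'.directed_le
  have hWr : μ W ≤ r := hWμ ▸ iSup_le fun n => (T n).2.2.2
  rcases eq_or_lt_of_le hWr with heq | hlt
  · exact ⟨W, hWs, hWm, heq⟩
  · exfalso
    have hdiff : 0 < μ (s \ W) := by
      rw [measure_diff hWs hWm.nullMeasurableSet (lt_of_le_of_lt (hWr.trans hr) (measure_lt_top μ s)).ne]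
      exact tsub_pos_of_lt (hlt.trans_le hr)
    obtain ⟨u, hus, hum, hu0, hule⟩ := small_piece hP (hs.diff hWm) hdiff
      ((measure_lt_top μ _).ne)
      (tsub_pos_of_lt hlt)
    -- u works at every stage
    have hkey : ∀ n, μ (T n).1 + μ u / 2 ≤ μ (T (n+1)).1 := by
      intro n
      rw [hTsucc n]
      have hsub : (T n).1 ⊆ W := hW ▸ subset_iUnion (fun m => (T m).1) n
      refine hg3 (T n).1 (T n).2 u (hus.trans (diff_subset_diff_right hsub))
        hum (hule.trans ?_)
      exact tsub_le_tsub_left (le_trans (le_iSup (fun n => μ (T n).1) n) hWμ.ge) r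
    have hgrow : ∀ n : ℕ, (n : ℝ≥0∞) * (μ u / 2) ≤ μ (T n).1 := by
      intro n
      induction n with
      | zero => simp
      | succ n ih =>
        push_cast
        calc ((n : ℝ≥0∞) + 1) * (μ u / 2) = (n : ℝ≥0∞) * (μ u / 2) + μ u / 2 := by ring
        _ ≤ μ (T n).1 + μ u / 2 := by gcongr
        _ ≤ μ (T (n+1)).1 := hkey n
    have hbdd : ∀ n : ℕ, (n : ℝ≥0∞) * (μ u / 2) ≤ 1 := by
      intro n
      refine (hgrow n).trans ?_
      exact (measure_mono (subset_univ _)).trans (by simp)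
    -- contradiction
    have ha0 : μ u / 2 ≠ 0 := by
      simp only [ne_eq, ENNReal.div_eq_zero_iff, not_or]
      exact ⟨hu0.ne', by simp⟩
    have hatop : μ u / 2 ≠ ∞ :=
      (ENNReal.div_lt_top (measure_lt_top μ _).ne (by simp)).ne
    obtain ⟨n, hn⟩ := ENNReal.exists_nat_gt
      ((ENNReal.div_lt_top (by simp) ha0).ne : 1 / (μ u / 2) ≠ ∞)
    have : (1 : ℝ≥0∞) < n * (μ u / 2) := by
      rw [ENNReal.div_lt_iff (Or.inl ha0) (Or.inl hatop)] at hn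
      exact hn
    exact absurd (hbdd n) (by simpa using this.not_ge)

section Uniform

variable {Ω : Type*} [MeasurableSpace Ω] (μ : Measure Ω) [IsProbabilityMeasure μ]
  (hP : Nonatomic μ)

open scoped Classical in
/-- A choice of a measurable subset of half the measure. -/
noncomputable def halfSet (s : Set Ω) : Set Ω :=
  if h : MeasurableSet s then
    (sierpinski hP h (ENNReal.half_le_self : μ s / 2 ≤ μ s)).choose
  else ∅

lemma halfSet_spec {s : Set Ω} (hs : MeasurableSet s) :
    halfSet μ hP s ⊆ s ∧ MeasurableSet (halfSet μ hP s) ∧ μ (halfSet μ hP s) = μ s / 2 := by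
  rw [halfSet, dif_pos hs]
  exact (sierpinski hP hs ENNReal.half_le_self).choose_spec

/-- Dyadic cells: at level `n` there are `2^n` cells of measure `2⁻ⁿ` each. -/
noncomputable def dyad : ℕ → ℕ → Set Ω
  | 0, j => if j = 0 then univ else ∅
  | n+1, j =>
    if j % 2 = 0 then halfSet μ hP (dyad n (j / 2))
    else dyad n (j / 2) \ halfSet μ hP (dyad n (j / 2))

lemma dyad_meas : ∀ n j, MeasurableSet (dyad μ hP n j) := by
  intro n
  induction n with
  | zero => intro j; rw [dyad]; split <;> simp
  | succ n ih =>
    intro j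
    rw [dyad]
    split
    · exact (halfSet_spec μ hP (ih (j / 2))).2.1
    · exact (ih (j / 2)).diff (halfSet_spec μ hP (ih (j / 2))).2.1

lemma dyad_succ_even (n j : ℕ) :
    dyad μ hP (n+1) (2*j) = halfSet μ hP (dyad μ hP n j) := by
  rw [dyad]
  simp [Nat.mul_div_cancel_left, Nat.mul_mod_right]

lemma dyad_succ_odd (n j : ℕ) :
    dyad μ hP (n+1) (2*j+1) = dyad μ hP n j \ halfSet μ hP (dyad μ hP n j) := by
  rw [dyad]
  have h1 : (2*j+1) % 2 = 1 := by omega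
  have h2 : (2*j+1) / 2 = j := by omega
  simp [h1, h2]

lemma dyad_subset (n j : ℕ) : dyad μ hP (n+1) j ⊆ dyad μ hP n (j / 2) := by
  rw [dyad]
  split
  · exact (halfSet_spec μ hP (dyad_meas μ hP n (j / 2))).1
  · exact diff_subset

lemma dyad_measure : ∀ n j, j < 2 ^ n → μ (dyad μ hP n j) = ((2 : ℝ≥0∞) ^ n)⁻¹ := by
  intro n
  induction n with
  | zero => intro j hj; interval_cases j <;> simp [dyad]
  | succ n ih =>
    intro j hj
    have hj2 : j / 2 < 2 ^ n := by omega
    have hm := dyad_meas μ hP n (j / 2)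
    have hhalf := halfSet_spec μ hP hm
    have hval : μ (halfSet μ hP (dyad μ hP n (j/2))) = ((2:ℝ≥0∞) ^ (n+1))⁻¹ := by
      rw [hhalf.2.2, ih _ hj2, pow_succ, div_eq_mul_inv,
        ← ENNReal.mul_inv (by simp) (by simp)]
    rw [dyad]
    split
    · exact hval
    · rw [measure_diff hhalf.1 hhalf.2.1.nullMeasurableSet (measure_lt_top μ _).ne,
        ih _ hj2, hhalf.2.2, ih _ hj2, ENNReal.sub_half (by simp), pow_succ,
        div_eq_mul_inv, ← ENNReal.mul_inv (by simp) (by simp)]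

lemma dyad_empty : ∀ n j, 2 ^ n ≤ j → dyad μ hP n j = ∅ := by
  intro n
  induction n with
  | zero => intro j hj; rw [dyad, if_neg (by omega)]
  | succ n ih =>
    intro j hj
    have h2 : 2 ^ n ≤ j / 2 := by omega
    have : dyad μ hP n (j / 2) = ∅ := ih _ h2
    rw [dyad]
    split
    · rw [this]
      exact subset_empty_iff.1 (halfSet_spec μ hP MeasurableSet.empty).1
    · rw [this]; simp

lemma dyad_disjoint : ∀ n i j, i ≠ j → Disjoint (dyad μ hP n i) (dyad μ hP n j) := by
  intro n
  induction n with
  | zero =>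
    intro i j hij
    rcases Nat.eq_zero_or_pos i with rfl | hi
    · rw [show dyad μ hP 0 j = ∅ by rw [dyad, if_neg (Ne.symm hij)]]
      exact disjoint_empty _
    · rw [show dyad μ hP 0 i = ∅ by rw [dyad, if_neg (by omega)]]
      exact empty_disjoint _
  | succ n ih =>
    intro i j hij
    rcases eq_or_ne (i / 2) (j / 2) with heq | hne
    · -- same parent, different parity
      have hpar : i % 2 ≠ j % 2 := by omega
      have hm := dyad_meas μ hP n (i / 2)
      have hhalf := halfSet_spec μ hP hm
      rcases Nat.mod_two_eq_zero_or_one i with hi | hi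
      · have hj : j % 2 = 1 := by omega
        rw [dyad, dyad, if_pos hi, if_neg (by omega), ← heq]
        exact disjoint_sdiff_right.mono_left subset_rfl
      · have hj : j % 2 = 0 := by omega
        rw [dyad, dyad, if_neg (by omega), if_pos hj, ← heq]
        exact disjoint_sdiff_left.mono_right subset_rfl
    · exact (ih _ _ hne).mono (dyad_subset μ hP n i) (dyad_subset μ hP n j)

end Uniform


section Unif2

variable {Ω : Type*} [MeasurableSpace Ω] (μ : Measure Ω) [IsProbabilityMeasure μ]
  (hP : Nonatomic μ)

open scoped Classical in
noncomputable def idx : ℕ → Ω → ℕ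
  | 0, _ => 0
  | n+1, ω =>
    if ω ∈ halfSet μ hP (dyad μ hP n (idx n ω)) then 2 * idx n ω
    else 2 * idx n ω + 1

lemma idx_zero (ω : Ω) : idx μ hP 0 ω = 0 := by rw [idx]

lemma idx_succ_cases (n : ℕ) (ω : Ω) :
    (idx μ hP (n+1) ω = 2 * idx μ hP n ω ∧ ω ∈ halfSet μ hP (dyad μ hP n (idx μ hP n ω))) ∨
    (idx μ hP (n+1) ω = 2 * idx μ hP n ω + 1 ∧
      ω ∉ halfSet μ hP (dyad μ hP n (idx μ hP n ω))) := by
  rw [idx]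
  by_cases h : ω ∈ halfSet μ hP (dyad μ hP n (idx μ hP n ω))
  · left; exact ⟨if_pos h, h⟩
  · right; exact ⟨if_neg h, h⟩

lemma idx_lt (n : ℕ) (ω : Ω) : idx μ hP n ω < 2 ^ n := by
  induction n with
  | zero => rw [idx_zero]; simp
  | succ n ih =>
    rcases idx_succ_cases μ hP n ω with ⟨h, _⟩ | ⟨h, _⟩ <;>
    · rw [h, pow_succ]; omega

lemma mem_dyad_idx (n : ℕ) (ω : Ω) : ω ∈ dyad μ hP n (idx μ hP n ω) := by
  induction n with
  | zero => rw [idx_zero, dyad]; simp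
  | succ n ih =>
    rcases idx_succ_cases μ hP n ω with ⟨h, hm⟩ | ⟨h, hm⟩
    · rw [h, dyad_succ_even]; exact hm
    · rw [h, dyad_succ_odd]; exact ⟨ih, hm⟩

lemma idx_preimage (n : ℕ) (j : ℕ) : (idx μ hP n) ⁻¹' {j} = dyad μ hP n j := by
  ext ω
  simp only [mem_preimage, mem_singleton_iff]
  constructor
  · rintro rfl; exact mem_dyad_idx μ hP n ω
  · intro hω
    by_contra hne
    exact (dyad_disjoint μ hP n _ _ hne).le_bot ⟨mem_dyad_idx μ hP n ω, hω⟩ |>.elim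

lemma idx_measurable (n : ℕ) : Measurable (idx μ hP n) := by
  refine measurable_to_countable' fun j => ?_
  rw [idx_preimage]
  exact dyad_meas μ hP n j

noncomputable def phiN (n : ℕ) (ω : Ω) : ℝ := (idx μ hP n ω : ℝ) / 2 ^ n

noncomputable def phi (ω : Ω) : ℝ := ⨆ n, phiN μ hP n ω

lemma phiN_measurable (n : ℕ) : Measurable (phiN μ hP n) := by
  apply Measurable.div_const
  exact measurable_from_top.comp (idx_measurable μ hP n)

lemma phiN_nonneg (n : ℕ) (ω : Ω) : 0 ≤ phiN μ hP n ω := by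
  rw [phiN]; positivity

lemma phiN_le_one (n : ℕ) (ω : Ω) : phiN μ hP n ω ≤ 1 := by
  rw [phiN, div_le_one (by positivity)]
  exact_mod_cast (idx_lt μ hP n ω).le

lemma phiN_mono_succ (n : ℕ) (ω : Ω) : phiN μ hP n ω ≤ phiN μ hP (n+1) ω := by
  have h2 : (0:ℝ) < 2 ^ n := by positivity
  have h2' : (0:ℝ) < 2 ^ (n+1) := by positivity
  rcases idx_succ_cases μ hP n ω with ⟨h, _⟩ | ⟨h, _⟩ <;>
    rw [phiN, phiN, h, div_le_div_iff₀ h2 h2'] <;>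
    · push_cast
      rw [pow_succ]
      ring_nf
      nlinarith [h2]

lemma phiN_succ_le (n : ℕ) (ω : Ω) :
    phiN μ hP (n+1) ω ≤ phiN μ hP n ω + ((2:ℝ) ^ (n+1))⁻¹ := by
  have h2 : (0:ℝ) < 2 ^ n := by positivity
  have h2' : (0:ℝ) < 2 ^ (n+1) := by positivity
  have key : phiN μ hP (n+1) ω ≤ ((2 * idx μ hP n ω + 1 : ℕ) : ℝ) / 2 ^ (n+1) := by
    rcases idx_succ_cases μ hP n ω with ⟨h, _⟩ | ⟨h, _⟩
    · rw [phiN, h]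
      gcongr
      push_cast
      linarith
    · rw [phiN, h]
  refine key.trans ?_
  rw [div_le_iff₀ h2']
  have hinv : ((2:ℝ)^(n+1))⁻¹ * 2^(n+1) = 1 := inv_mul_cancel₀ (by positivity)
  have hphi : phiN μ hP n ω * 2 ^ n = (idx μ hP n ω : ℝ) := by
    rw [phiN]
    field_simp
  push_cast
  rw [add_mul, hinv, pow_succ, ← mul_assoc, hphi]
  linarith

lemma phiN_mono (ω : Ω) : Monotone fun n => phiN μ hP n ω :=
  monotone_nat_of_le_succ fun n => phiN_mono_succ μ hP n ω

lemma phiN_bdd (ω : Ω) : BddAbove (Set.range fun n => phiN μ hP n ω) :=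
  ⟨1, by rintro x ⟨n, rfl⟩; exact phiN_le_one μ hP n ω⟩

lemma phiN_le_phi (n : ℕ) (ω : Ω) : phiN μ hP n ω ≤ phi μ hP ω :=
  le_ciSup (phiN_bdd μ hP ω) n

lemma phi_le_phiN_add (n : ℕ) (ω : Ω) : phi μ hP ω ≤ phiN μ hP n ω + ((2:ℝ) ^ n)⁻¹ := by
  refine ciSup_le fun m => ?_
  rcases le_or_gt m n with hmn | hnm
  · exact (phiN_mono μ hP ω hmn).trans (le_add_of_nonneg_right (by positivity))
  · have key : ∀ l : ℕ, phiN μ hP (n + l) ω ≤ phiN μ hP n ω + ((2:ℝ)^n)⁻¹ - ((2:ℝ)^(n+l))⁻¹ := by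
      intro l
      induction l with
      | zero => simp
      | succ l ih =>
        have hstep := phiN_succ_le μ hP (n + l) ω
        have harith : ((2:ℝ)^(n+l))⁻¹ = 2 * ((2:ℝ)^(n+l+1))⁻¹ := by
          rw [pow_succ]
          have h0 : ((2:ℝ)^(n+l)) ≠ 0 := by positivity
          field_simp
        calc phiN μ hP (n + (l+1)) ω = phiN μ hP ((n + l) + 1) ω := by rw [← Nat.add_assoc]
        _ ≤ phiN μ hP (n+l) ω + ((2:ℝ) ^ (n+l+1))⁻¹ := hstep
        _ ≤ phiN μ hP n ω + ((2:ℝ)^n)⁻¹ - ((2:ℝ)^(n+l))⁻¹ + ((2:ℝ) ^ (n+l+1))⁻¹ := by gcongr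
        _ = phiN μ hP n ω + ((2:ℝ)^n)⁻¹ - ((2:ℝ)^(n+(l+1)))⁻¹ := by
          rw [show n + (l+1) = n + l + 1 by ring, harith]; ring
    obtain ⟨l, rfl⟩ := Nat.exists_eq_add_of_le hnm.le
    calc phiN μ hP (n + l) ω ≤ phiN μ hP n ω + ((2:ℝ)^n)⁻¹ - ((2:ℝ)^(n+l))⁻¹ := key l
    _ ≤ phiN μ hP n ω + ((2:ℝ)^n)⁻¹ := by
      have : (0:ℝ) < ((2:ℝ)^(n+l))⁻¹ := by positivity
      linarith

lemma phi_nonneg (ω : Ω) : 0 ≤ phi μ hP ω :=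
  le_trans (by rw [phiN, idx_zero]; simp) (phiN_le_phi μ hP 0 ω)

lemma phi_le_one (ω : Ω) : phi μ hP ω ≤ 1 :=
  ciSup_le fun n => phiN_le_one μ hP n ω

lemma phi_measurable : Measurable (phi μ hP) :=
  Measurable.iSup fun n => phiN_measurable μ hP n

end Unif2


section Unif3

variable {Ω : Type*} [MeasurableSpace Ω] (μ : Measure Ω) [IsProbabilityMeasure μ]
  (hP : Nonatomic μ)

lemma dyad_union_measure (n j : ℕ) (hj : j ≤ 2 ^ n) :
    μ (⋃ i ∈ Finset.range j, dyad μ hP n i) = (j : ℝ≥0∞) * ((2:ℝ≥0∞) ^ n)⁻¹ := by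
  rw [measure_biUnion_finset ?_ (fun i _ => dyad_meas μ hP n i)]
  · rw [Finset.sum_congr rfl (fun i hi => dyad_measure μ hP n i
      (lt_of_lt_of_le (Finset.mem_range.1 hi) hj))]
    simp [Finset.sum_const, mul_comm]
  · intro a _ b _ hab
    exact dyad_disjoint μ hP n a b hab

lemma phi_cdf (x : ℝ) : μ {ω | phi μ hP ω ≤ x} = ENNReal.ofReal (min x 1) := by
  rcases lt_or_ge x 0 with hx | hx
  · have : {ω | phi μ hP ω ≤ x} = ∅ := by
      ext ω; simp only [mem_setOf_eq, mem_empty_iff_false, iff_false, not_le]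
      exact hx.trans_le (phi_nonneg μ hP ω)
    rw [this]
    simp [min_eq_left (hx.le.trans zero_le_one), ENNReal.ofReal_eq_zero.2 hx.le]
  rcases le_or_gt 1 x with hx1 | hx1
  · have : {ω | phi μ hP ω ≤ x} = univ := by
      ext ω; simp only [mem_setOf_eq, mem_univ, iff_true]
      exact (phi_le_one μ hP ω).trans hx1
    rw [this, min_eq_right hx1]
    simp
  · -- 0 ≤ x < 1
    rw [min_eq_left hx1.le]
    have hbound : ∀ n : ℕ,
        ENNReal.ofReal (x - ((2:ℝ)^n)⁻¹) ≤ μ {ω | phi μ hP ω ≤ x} ∧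
        μ {ω | phi μ hP ω ≤ x} ≤ ENNReal.ofReal (x + ((2:ℝ)^n)⁻¹) := by
      intro n
      set m := Nat.floor (x * 2 ^ n) with hm
      have hxm : x * 2 ^ n < m + 1 := Nat.lt_floor_add_one _
      have hmx : (m : ℝ) ≤ x * 2 ^ n := Nat.floor_le (by positivity)
      have hmlt : m < 2 ^ n := by
        rw [hm, Nat.floor_lt (by positivity)]
        push_cast
        nlinarith [pow_pos (by norm_num : (0:ℝ) < 2) n]
      have hcast : ∀ j : ℕ, j ≤ 2 ^ n →
          (j : ℝ≥0∞) * ((2:ℝ≥0∞) ^ n)⁻¹ = ENNReal.ofReal ((j : ℝ) / 2 ^ n) := by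
        intro j hj
        have h2n : ENNReal.ofReal ((2:ℝ)^n) = (2:ℝ≥0∞)^n := by
          rw [ENNReal.ofReal_pow (by norm_num)]
          norm_num
        rw [ENNReal.ofReal_div_of_pos (by positivity), h2n, ENNReal.ofReal_natCast,
          div_eq_mul_inv]
      constructor
      · -- lower bound
        have hsub : (⋃ i ∈ Finset.range m, dyad μ hP n i) ⊆ {ω | phi μ hP ω ≤ x} := by
          intro ω hω
          simp only [Finset.mem_range, mem_iUnion] at hω
          obtain ⟨i, hi, hωi⟩ := hω
          have hidx : idx μ hP n ω = i := by
            have hmem : ω ∈ (idx μ hP n) ⁻¹' {i} := by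
              rw [idx_preimage]; exact hωi
            simpa using hmem
          have h1 : phi μ hP ω ≤ phiN μ hP n ω + ((2:ℝ)^n)⁻¹ := phi_le_phiN_add μ hP n ω
          have h2 : phiN μ hP n ω = (i : ℝ) / 2 ^ n := by rw [phiN, hidx]
          have h3 : (i : ℝ) / 2^n + ((2:ℝ)^n)⁻¹ = ((i:ℝ)+1)/2^n := by
            field_simp
          have h4 : ((i:ℝ)+1)/2^n ≤ (m:ℝ)/2^n := by
            gcongr
            have : (i:ℝ) + 1 ≤ (m:ℝ) := by exact_mod_cast hi
            linarith
          have h5 : (m:ℝ)/2^n ≤ x := by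
            rw [div_le_iff₀ (by positivity)]
            exact hmx
          simp only [mem_setOf_eq]
          calc phi μ hP ω ≤ (i : ℝ)/2^n + ((2:ℝ)^n)⁻¹ := by rw [← h2]; exact h1
          _ ≤ x := by rw [h3]; exact h4.trans h5
        calc ENNReal.ofReal (x - ((2:ℝ)^n)⁻¹) ≤ ENNReal.ofReal ((m:ℝ)/2^n) := by
              apply ENNReal.ofReal_le_ofReal
              rw [le_div_iff₀ (by positivity : (0:ℝ) < 2^n), sub_mul]
              have : ((2:ℝ)^n)⁻¹ * 2^n = 1 := inv_mul_cancel₀ (by positivity)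
              rw [this]
              linarith
        _ = μ (⋃ i ∈ Finset.range m, dyad μ hP n i) := by
              rw [dyad_union_measure μ hP n m hmlt.le, hcast m hmlt.le]
        _ ≤ μ {ω | phi μ hP ω ≤ x} := measure_mono hsub
      · -- upper bound
        have hsub : {ω | phi μ hP ω ≤ x} ⊆ ⋃ i ∈ Finset.range (m+1), dyad μ hP n i := by
          intro ω hω
          simp only [mem_setOf_eq] at hω
          simp only [Finset.mem_range, mem_iUnion]
          refine ⟨idx μ hP n ω, ?_, mem_dyad_idx μ hP n ω⟩
          by_contra hge
          push_neg at hge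
          have h1 : phiN μ hP n ω ≤ phi μ hP ω := phiN_le_phi μ hP n ω
          have h2 : ((m:ℝ)+1)/2^n ≤ phiN μ hP n ω := by
            rw [phiN]
            gcongr
            exact_mod_cast hge
          have h3 : x < ((m:ℝ)+1)/2^n := by
            rw [lt_div_iff₀ (by positivity : (0:ℝ) < 2^n)]
            exact hxm
          linarith
        calc μ {ω | phi μ hP ω ≤ x} ≤ μ (⋃ i ∈ Finset.range (m+1), dyad μ hP n i) :=
              measure_mono hsub
        _ = ENNReal.ofReal (((m:ℝ)+1)/2^n) := by
              rw [dyad_union_measure μ hP n (m+1) hmlt, hcast (m+1) hmlt]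
              push_cast
              ring_nf
        _ ≤ ENNReal.ofReal (x + ((2:ℝ)^n)⁻¹) := by
              apply ENNReal.ofReal_le_ofReal
              rw [div_le_iff₀ (by positivity : (0:ℝ) < 2^n), add_mul]
              have : ((2:ℝ)^n)⁻¹ * 2^n = 1 := inv_mul_cancel₀ (by positivity)
              rw [this]
              linarith
    -- squeeze
    have hfin : μ {ω | phi μ hP ω ≤ x} ≠ ∞ := (measure_lt_top μ _).ne
    set r := (μ {ω | phi μ hP ω ≤ x}).toReal with hr
    have hrx : r = x := by
      have habs : ∀ n : ℕ, |r - x| ≤ ((2:ℝ)^n)⁻¹ := by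
        intro n
        obtain ⟨hlo, hhi⟩ := hbound n
        have h1 : x - ((2:ℝ)^n)⁻¹ ≤ r :=
          (ENNReal.ofReal_le_iff_le_toReal hfin).1 hlo
        have h2 : r ≤ x + ((2:ℝ)^n)⁻¹ :=
          ENNReal.toReal_le_of_le_ofReal (by positivity) hhi
        rw [abs_le]
        constructor <;> linarith
      by_contra hne
      have hpos : 0 < |r - x| := abs_pos.2 (sub_ne_zero.2 hne)
      obtain ⟨n, hn⟩ := exists_pow_lt_of_lt_one hpos (by norm_num : (2:ℝ)⁻¹ < 1)
      rw [inv_pow] at hn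
      exact absurd (habs n) (not_le.2 hn)
    rw [← ENNReal.ofReal_toReal hfin, ← hr, hrx]

lemma phi_map_Iic (x : ℝ) :
    (μ.map (phi μ hP)) (Iic x) = ENNReal.ofReal (min x 1) := by
  rw [Measure.map_apply (phi_measurable μ hP) measurableSet_Iic]
  exact phi_cdf μ hP x

end Unif3


section Quantile

open Filter

noncomputable def qtl (ρ : Measure ℝ) (s : ℝ) : ℝ :=
  sInf {x : ℝ | 0 ≤ x ∧ s ≤ cdf ρ x}

lemma qtl_bddBelow {ρ : Measure ℝ} {s : ℝ} : BddBelow {x : ℝ | 0 ≤ x ∧ s ≤ cdf ρ x} :=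
  ⟨0, fun x hx => hx.1⟩

variable {ρ : Measure ℝ} [IsProbabilityMeasure ρ]

lemma qtl_set_nonempty (hs : s < 1) : {x : ℝ | 0 ≤ x ∧ s ≤ cdf ρ x}.Nonempty := by
  have := tendsto_cdf_atTop ρ
  have hev : ∀ᶠ x in atTop, s < cdf ρ x :=
    this.eventually (eventually_gt_nhds hs)
  obtain ⟨x, hx⟩ := (hev.and (eventually_ge_atTop (0:ℝ))).exists
  exact ⟨x, hx.2, hx.1.le⟩

lemma qtl_nonneg (hs : s < 1) : 0 ≤ qtl ρ s :=
  le_csInf (qtl_set_nonempty hs) fun x hx => hx.1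

lemma cdf_qtl_ge (hs : s < 1) : s ≤ cdf ρ (qtl ρ s) := by
  set m := qtl ρ s with hm
  have hall : ∀ z, m < z → s ≤ cdf ρ z := by
    intro z hz
    obtain ⟨x, hx, hxz⟩ := (csInf_lt_iff qtl_bddBelow (qtl_set_nonempty hs)).1 hz
    exact hx.2.trans ((cdf ρ).mono hxz.le)
  have hrc : Tendsto (cdf ρ) (nhdsWithin m (Ioi m)) (nhds (cdf ρ m)) :=
    ((cdf ρ).right_continuous m).mono_left (nhdsWithin_mono m Ioi_subset_Ici_self)
  refine ge_of_tendsto hrc ?_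
  filter_upwards [self_mem_nhdsWithin] with z hz
  exact hall z hz

lemma qtl_le_iff (hs : s < 1) (hy : 0 ≤ y) : qtl ρ s ≤ y ↔ s ≤ cdf ρ y := by
  constructor
  · intro h
    exact (cdf_qtl_ge hs).trans ((cdf ρ).mono h)
  · intro h
    exact csInf_le qtl_bddBelow ⟨hy, h⟩

lemma qtl_le_qtl {ρ₁ ρ₂ : Measure ℝ} [IsProbabilityMeasure ρ₁]
    (hcdf : ∀ x, cdf ρ₁ x ≤ cdf ρ₂ x) (hs : s < 1) : qtl ρ₂ s ≤ qtl ρ₁ s := by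
  refine csInf_le_csInf qtl_bddBelow (qtl_set_nonempty hs) ?_
  rintro x ⟨h0, h1⟩
  exact ⟨h0, h1.trans (hcdf x)⟩

end Quantile

section Wfun

open scoped Classical in
noncomputable def wfun (ρ : Measure ℝ) (a p : ℝ) : ℝ → ℝ :=
  fun t => if t ∈ Ioc a (a + p) then qtl ρ (1 - (t - a)) else 0

lemma wfun_zero_outside {ρ : Measure ℝ} {a p : ℝ} (t : ℝ) (ht : t ∉ Ioc a (a + p)) :
    wfun ρ a p t = 0 := by
  rw [wfun, if_neg ht]

variable {ρ : Measure ℝ} [IsProbabilityMeasure ρ] {a p : ℝ}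

lemma wfun_nonneg (ha : 0 ≤ a) (t : ℝ) : 0 ≤ wfun ρ a p t := by
  rw [wfun]
  split
  · rename_i h
    exact qtl_nonneg (by simp only [mem_Ioc] at h; linarith [h.1])
  · exact le_refl 0

lemma wfun_gt_preimage (hp : 0 ≤ p) (hm : 1 - p ≤ cdf ρ 0) {y : ℝ} (hy : 0 ≤ y) :
    {t : ℝ | y < wfun ρ a p t} = Ioo a (a + (1 - cdf ρ y)) := by
  have hFy : 1 - p ≤ cdf ρ y := hm.trans ((cdf ρ).mono hy)
  have hFy1 : cdf ρ y ≤ 1 := cdf_le_one ρ y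
  ext t
  simp only [mem_setOf_eq, mem_Ioo]
  constructor
  · intro h
    have htIoc : t ∈ Ioc a (a + p) := by
      by_contra hc
      rw [wfun_zero_outside t hc] at h
      exact absurd h (not_lt.2 hy)
    rw [wfun, if_pos htIoc] at h
    obtain ⟨hta, htb⟩ := htIoc
    have hs1 : 1 - (t - a) < 1 := by linarith
    have : ¬ (qtl ρ (1 - (t - a)) ≤ y) := not_le.2 h
    rw [qtl_le_iff hs1 hy] at this
    push_neg at this
    constructor
    · exact hta
    · linarith
  · rintro ⟨hta, htb⟩
    have htb' : t ≤ a + p := by linarith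
    have htIoc : t ∈ Ioc a (a + p) := ⟨hta, htb'⟩
    rw [wfun, if_pos htIoc]
    have hs1 : 1 - (t - a) < 1 := by linarith
    refine not_le.1 ?_
    rw [qtl_le_iff hs1 hy]
    push_neg
    linarith

lemma wfun_measurable (ha : 0 ≤ a) (hp : 0 ≤ p) (hm : 1 - p ≤ cdf ρ 0) :
    Measurable (wfun ρ a p) := by
  refine measurable_of_Ioi fun y => ?_
  rcases lt_or_ge y 0 with hy | hy
  · have : wfun ρ a p ⁻¹' Ioi y = univ := by
      ext t
      simp only [mem_preimage, mem_Ioi, mem_univ, iff_true]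
      exact hy.trans_le (wfun_nonneg ha t)
    rw [this]; exact MeasurableSet.univ
  · have : wfun ρ a p ⁻¹' Ioi y = Ioo a (a + (1 - cdf ρ y)) := by
      rw [← wfun_gt_preimage hp hm hy]
      rfl
    rw [this]; exact measurableSet_Ioo

lemma wfun_le_wfun {ρ₁ ρ₂ : Measure ℝ} [IsProbabilityMeasure ρ₁] [IsProbabilityMeasure ρ₂]
    (hcdf : ∀ x, cdf ρ₁ x ≤ cdf ρ₂ x) (t : ℝ) :
    wfun ρ₂ a p t ≤ wfun ρ₁ a p t := by
  rw [wfun, wfun]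
  split
  · rename_i h
    simp only [mem_Ioc] at h
    exact qtl_le_qtl hcdf (by linarith [h.1])
  · exact le_refl 0

end Wfun


section WfunMap

variable {L ρ : Measure ℝ} [IsProbabilityMeasure L] [IsProbabilityMeasure ρ] {a p : ℝ}

lemma L_Iic_diff (hL : ∀ x, L (Iic x) = ENNReal.ofReal (min x 1)) {u v : ℝ} (huv : u ≤ v) :
    L (Ioc u v) = ENNReal.ofReal (min v 1) - ENNReal.ofReal (min u 1) := by
  have : Ioc u v = Iic v \ Iic u := by
    ext t; simp only [mem_Ioc, mem_diff, mem_Iic, not_le]; tauto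
  rw [this]
  rw [measure_diff (Iic_subset_Iic.2 huv) measurableSet_Iic.nullMeasurableSet
    (measure_lt_top L _).ne, hL, hL]

lemma L_singleton (hL : ∀ x, L (Iic x) = ENNReal.ofReal (min x 1)) (b : ℝ) : L {b} = 0 := by
  refine le_antisymm ?_ zero_le
  refine ENNReal.le_of_forall_pos_le_add fun ε hε _ => ?_
  rw [zero_add]
  have hsub : {b} ⊆ Ioc (b - ε) b := by
    intro t ht
    rw [mem_singleton_iff] at ht
    subst ht
    exact ⟨by simp [hε], le_refl _⟩
  refine (measure_mono hsub).trans ?_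
  rw [L_Iic_diff hL (by simp [hε.le] : b - (ε:ℝ) ≤ b)]
  have hε' : (0:ℝ) < ε := hε
  rcases le_or_gt (min (b - ε) 1) 0 with hneg | hpos
  · -- then min b 1 ≤ ε
    have h1 : min b 1 ≤ (ε : ℝ) := by
      simp only [min_def] at hneg ⊢
      split_ifs at hneg ⊢ <;> linarith
    calc ENNReal.ofReal (min b 1) - ENNReal.ofReal (min (b - ε) 1)
        ≤ ENNReal.ofReal (min b 1) := tsub_le_self
    _ ≤ ENNReal.ofReal (ε : ℝ) := ENNReal.ofReal_le_ofReal h1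
    _ = (ε : ℝ≥0∞) := ENNReal.ofReal_coe_nnreal
  · rw [← ENNReal.ofReal_sub _ hpos.le]
    have h2 : min b 1 - min (b - ε) 1 ≤ (ε : ℝ) := by
      simp only [min_def]
      split_ifs <;> linarith
    calc ENNReal.ofReal (min b 1 - min (b - ε) 1) ≤ ENNReal.ofReal (ε : ℝ) :=
          ENNReal.ofReal_le_ofReal h2
    _ = (ε : ℝ≥0∞) := ENNReal.ofReal_coe_nnreal

lemma wfun_map (hL : ∀ x, L (Iic x) = ENNReal.ofReal (min x 1))
    (hρ0 : ρ (Iio 0) = 0) (ha : 0 ≤ a) (hp : 0 ≤ p) (hap : a + p ≤ 1)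
    (hm : 1 - p ≤ cdf ρ 0) :
    L.map (wfun ρ a p) = ρ := by
  have hw := wfun_measurable (ρ := ρ) (a := a) (p := p) ha hp hm
  have : IsProbabilityMeasure (L.map (wfun ρ a p)) :=
    Measure.isProbabilityMeasure_map hw.aemeasurable
  refine Measure.ext_of_Iic (L.map (wfun ρ a p)) ρ fun y => ?_
  rw [Measure.map_apply hw measurableSet_Iic]
  rcases lt_or_ge y 0 with hy | hy
  · have h1 : wfun ρ a p ⁻¹' Iic y = ∅ := by
      ext t
      simp only [mem_preimage, mem_Iic, mem_empty_iff_false, iff_false, not_le]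
      exact hy.trans_le (wfun_nonneg ha t)
    have h2 : ρ (Iic y) = 0 :=
      le_antisymm (le_trans (measure_mono (Iic_subset_Iio.2 hy)) hρ0.le) zero_le
    rw [h1, h2, measure_empty]
  · -- y ≥ 0
    have hFy : 1 - p ≤ cdf ρ y := hm.trans ((cdf ρ).mono hy)
    have hFy1 : cdf ρ y ≤ 1 := cdf_le_one ρ y
    have hFy0 : 0 ≤ cdf ρ y := cdf_nonneg ρ y
    have hcompl : wfun ρ a p ⁻¹' Iic y = (Ioo a (a + (1 - cdf ρ y)))ᶜ := by
      rw [← wfun_gt_preimage hp hm hy]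
      ext t
      simp only [mem_preimage, mem_Iic, mem_compl_iff, mem_setOf_eq, not_lt]
    rw [hcompl, measure_compl measurableSet_Ioo (measure_lt_top L _).ne]
    have hIoo : L (Ioo a (a + (1 - cdf ρ y))) = ENNReal.ofReal (1 - cdf ρ y) := by
      have hz : a ≤ a + (1 - cdf ρ y) := by linarith
      have hball : L (Ioo a (a + (1 - cdf ρ y))) = L (Ioc a (a + (1 - cdf ρ y))) := by
        refine le_antisymm (measure_mono Ioo_subset_Ioc_self) ?_
        calc L (Ioc a (a + (1 - cdf ρ y)))
            ≤ L (Ioo a (a + (1 - cdf ρ y)) ∪ {a + (1 - cdf ρ y)}) := by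
              refine measure_mono ?_
              intro t ⟨h1, h2⟩
              rcases lt_or_eq_of_le h2 with h | h
              · exact Or.inl ⟨h1, h⟩
              · exact Or.inr (by simp [h])
        _ ≤ L (Ioo a (a + (1 - cdf ρ y))) + L {a + (1 - cdf ρ y)} := measure_union_le _ _
        _ = L (Ioo a (a + (1 - cdf ρ y))) := by rw [L_singleton hL, add_zero]
      rw [hball, L_Iic_diff hL hz]
      have hin1 : min (a + (1 - cdf ρ y)) 1 = a + (1 - cdf ρ y) := by
        rw [min_eq_left]; linarith
      have hin2 : min a 1 = a := by rw [min_eq_left]; linarith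
      rw [hin1, hin2, ← ENNReal.ofReal_sub _ ha]
      ring_nf
    rw [hIoo]
    have huniv : L univ = 1 := measure_univ
    rw [huniv]
    rw [show (1:ℝ≥0∞) = ENNReal.ofReal (1:ℝ) by simp, ← ENNReal.ofReal_sub _ (by linarith),
      ← ofReal_cdf ρ y]
    congr 1
    ring
end WfunMap

end NonatomicAux

/-- Given a set `A` with `P(A) ≤ 1/k` on which `|X|` dominates its values off `A`, and sets
`A₁, …, A_k` with `P(Aᵢ) ≤ P(A)`, one can realize disjoint copies `Uᵢ ~ |X|·1_A` and
disjoint copies `Vᵢ ~ |X|·1_{Aᵢ}` with `Vᵢ ≤ Uᵢ` a.e. -/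
theorem exists_disjoint_dominated_copies
    {Ω : Type*} [MeasurableSpace Ω] (P : Measure Ω) [IsProbabilityMeasure P]
    (hP : Nonatomic P) (X : Ω → ℝ) (hX : Integrable X P)
    (k : ℕ) (hk : 1 ≤ k)
    (A : Set Ω) (hA : MeasurableSet A) (hPA : P A ≤ 1 / (k : ℝ≥0∞))
    (c : ℝ) (hc : 0 ≤ c)
    (hcA : ∀ᵐ ω ∂P, ω ∈ A → c ≤ |X ω|)
    (hcAc : ∀ᵐ ω ∂P, ω ∉ A → |X ω| ≤ c)
    (B : Fin k → Set Ω) (hB : ∀ i, MeasurableSet (B i))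
    (hPB : ∀ i, P (B i) ≤ P A) :
    ∃ U V : Fin k → Ω → ℝ,
      (∀ i, Measurable (U i)) ∧ (∀ i, Measurable (V i)) ∧
      (∀ i, ∀ᵐ ω ∂P, 0 ≤ U i ω) ∧ (∀ i, ∀ᵐ ω ∂P, 0 ≤ V i ω) ∧
      (∀ i j, i ≠ j → ∀ᵐ ω ∂P, U i ω * U j ω = 0) ∧
      (∀ i j, i ≠ j → ∀ᵐ ω ∂P, V i ω * V j ω = 0) ∧
      (∀ i, IdentDistrib (U i) (A.indicator fun ω => |X ω|) P P) ∧
      (∀ i, IdentDistrib (V i) ((B i).indicator fun ω => |X ω|) P P) ∧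
      (∀ i, ∀ᵐ ω ∂P, V i ω ≤ U i ω) := by
  classical
  open NonatomicAux in
  set f : Ω → ℝ := A.indicator fun ω => |X ω| with hf
  set g : Fin k → Ω → ℝ := fun i => (B i).indicator fun ω => |X ω| with hg
  have hXm : AEMeasurable X P := hX.aemeasurable
  have hfm : AEMeasurable f P := (measurable_abs.comp_aemeasurable hXm).indicator hA
  have hgm : ∀ i, AEMeasurable (g i) P := fun i => (measurable_abs.comp_aemeasurable hXm).indicator (hB i)
  have hf0 : ∀ ω, 0 ≤ f ω := fun ω => Set.indicator_nonneg (fun ω _ => abs_nonneg _) ω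
  have hg0 : ∀ i ω, 0 ≤ g i ω := fun i ω => Set.indicator_nonneg (fun ω _ => abs_nonneg _) ω
  have hfval : ∀ ω, ω ∈ A → f ω = |X ω| := fun ω h => Set.indicator_of_mem h _
  have hfval0 : ∀ ω, ω ∉ A → f ω = 0 := fun ω h => Set.indicator_of_notMem h _
  have hgval : ∀ i ω, ω ∈ B i → g i ω = |X ω| := fun i ω h => Set.indicator_of_mem h _
  have hgval0 : ∀ i ω, ω ∉ B i → g i ω = 0 := fun i ω h => Set.indicator_of_notMem h _
  set ν : Measure ℝ := P.map f with hν
  set νB : Fin k → Measure ℝ := fun i => P.map (g i) with hνB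
  haveI hνprob : IsProbabilityMeasure ν := Measure.isProbabilityMeasure_map hfm
  haveI hνBprob : ∀ i, IsProbabilityMeasure (νB i) :=
    fun i => Measure.isProbabilityMeasure_map (hgm i)
  -- nonnegativity of laws
  have hνIio : ν (Iio 0) = 0 := by
    rw [hν, Measure.map_apply_of_aemeasurable hfm measurableSet_Iio]
    have : f ⁻¹' Iio 0 = ∅ := by
      ext ω; simp only [Set.mem_preimage, Set.mem_Iio, Set.mem_empty_iff_false, iff_false,
        not_lt]
      exact hf0 ω
    rw [this, measure_empty]
  have hνBIio : ∀ i, νB i (Iio 0) = 0 := by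
    intro i
    rw [hνB, Measure.map_apply_of_aemeasurable (hgm i) measurableSet_Iio]
    have : g i ⁻¹' Iio 0 = ∅ := by
      ext ω; simp only [Set.mem_preimage, Set.mem_Iio, Set.mem_empty_iff_false, iff_false,
        not_lt]
      exact hg0 i ω
    rw [this, measure_empty]
  set p : ℝ := (P A).toReal with hp
  have hp0 : 0 ≤ p := ENNReal.toReal_nonneg
  have hpB : ∀ i, (P (B i)).toReal ≤ p := fun i =>
    ENNReal.toReal_mono (measure_ne_top P A) (hPB i)
  -- mass at 0
  have hmassgen : ∀ (S : Set Ω), MeasurableSet S → ∀ (h : Ω → ℝ), AEMeasurable h P →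
      (∀ ω, ω ∉ S → h ω = 0) →
      1 - (P S).toReal ≤ cdf (P.map h) 0 := by
    intro S hS h hhm hout
    haveI : IsProbabilityMeasure (P.map h) := Measure.isProbabilityMeasure_map hhm
    have h1 : P Sᶜ ≤ (P.map h) (Iic 0) := by
      rw [Measure.map_apply_of_aemeasurable hhm measurableSet_Iic]
      refine measure_mono fun ω hω => ?_
      simp only [Set.mem_preimage, Set.mem_Iic]
      rw [hout ω hω]
    have h2 : P Sᶜ = 1 - P S := by
      rw [measure_compl hS (measure_ne_top P S), measure_univ]
    rw [cdf_eq_real, measureReal_def]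
    calc 1 - (P S).toReal = (1 - P S).toReal := by
          rw [ENNReal.toReal_sub_of_le prob_le_one ENNReal.one_ne_top, ENNReal.toReal_one]
    _ = (P Sᶜ).toReal := by rw [h2]
    _ ≤ ((P.map h) (Iic 0)).toReal :=
          ENNReal.toReal_mono (measure_ne_top _ _) h1
  have hmassν : 1 - p ≤ cdf ν 0 :=
    hmassgen A hA f hfm hfval0
  have hmassνB : ∀ i, 1 - p ≤ cdf (νB i) 0 := by
    intro i
    refine le_trans ?_ (hmassgen (B i) (hB i) (g i) (hgm i) (hgval0 i))
    have := hpB i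
    linarith
  -- stochastic dominance
  have hdom : ∀ i y, ν (Iic y) ≤ νB i (Iic y) := by
    intro i y
    rcases lt_or_ge y 0 with hy | hy
    · refine le_trans ?_ zero_le
      rw [show ν (Iic y) = 0 from le_antisymm
        (le_trans (measure_mono (Iic_subset_Iio.2 hy)) hνIio.le) zero_le]
    · -- complements
      have hGf : f ⁻¹' (Iic y) = (f ⁻¹' (Ioi y))ᶜ := by
        ext ω
        simp only [Set.mem_preimage, Set.mem_Iic, Set.mem_compl_iff, Set.mem_Ioi, not_lt]
      have hGg : g i ⁻¹' (Iic y) = (g i ⁻¹' (Ioi y))ᶜ := by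
        ext ω
        simp only [Set.mem_preimage, Set.mem_Iic, Set.mem_compl_iff, Set.mem_Ioi, not_lt]
      have hNf : MeasureTheory.NullMeasurableSet (f ⁻¹' (Ioi y)) P :=
        hfm.nullMeasurable measurableSet_Ioi
      have hNg : MeasureTheory.NullMeasurableSet (g i ⁻¹' (Ioi y)) P :=
        (hgm i).nullMeasurable measurableSet_Ioi
      have hmono : P (g i ⁻¹' (Ioi y)) ≤ P (f ⁻¹' (Ioi y)) := by
        rcases le_or_gt c y with hcy | hyc
        · -- y ≥ c : a.e. inclusion
          refine measure_mono_ae ?_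
          filter_upwards [hcAc] with ω hω
          intro hmem0
          have hmem : y < g i ω := hmem0
          refine (?_ : y < f ω)
          have hBmem : ω ∈ B i := by
            by_contra hB'
            rw [hgval0 i ω hB'] at hmem
            exact absurd hmem (not_lt.2 hy)
          rw [hgval i ω hBmem] at hmem
          have hωA : ω ∈ A := by
            by_contra hA'
            exact absurd (hω hA') (not_le.2 (lt_of_le_of_lt hcy hmem))
          rw [hfval ω hωA]
          exact hmem
        · -- y < c
          have h1 : P (g i ⁻¹' (Ioi y)) ≤ P (B i) := by
            refine measure_mono fun ω hω => ?_
            have hω' : y < g i ω := hω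
            by_contra hB'
            rw [hgval0 i ω hB'] at hω'
            exact absurd hω' (not_lt.2 hy)
          have h2 : P A ≤ P (f ⁻¹' (Ioi y)) := by
            refine measure_mono_ae ?_
            filter_upwards [hcA] with ω hω
            intro hmem
            refine (?_ : y < f ω)
            rw [hfval ω hmem]
            exact lt_of_lt_of_le hyc (hω hmem)
          exact h1.trans ((hPB i).trans h2)
      rw [hν, hνB, Measure.map_apply_of_aemeasurable hfm measurableSet_Iic,
        Measure.map_apply_of_aemeasurable (hgm i) measurableSet_Iic, hGf, hGg,
        measure_compl₀ hNf (measure_ne_top _ _), measure_compl₀ hNg (measure_ne_top _ _)]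
      exact tsub_le_tsub_left hmono _
  have hcdfdom : ∀ i x, cdf ν x ≤ cdf (νB i) x := by
    intro i x
    rw [cdf_eq_real, cdf_eq_real, measureReal_def, measureReal_def]
    exact ENNReal.toReal_mono (measure_ne_top _ _) (hdom i x)
  -- arithmetic
  have hkpos : (0:ℝ) < k := by exact_mod_cast hk
  have hkp : (k:ℝ) * p ≤ 1 := by
    have hk0 : (k:ℝ≥0∞) ≠ 0 := by
      exact_mod_cast (by omega : k ≠ 0)
    have h1 : p ≤ ((1:ℝ≥0∞) / k).toReal :=
      ENNReal.toReal_mono (ENNReal.div_lt_top ENNReal.one_ne_top hk0).ne hPA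
    have h2 : ((1:ℝ≥0∞) / k).toReal = 1 / (k:ℝ) := by
      rw [ENNReal.toReal_div, ENNReal.toReal_one, ENNReal.toReal_natCast]
    rw [h2] at h1
    calc (k:ℝ) * p ≤ (k:ℝ) * (1 / k) := by
          exact mul_le_mul_of_nonneg_left h1 hkpos.le
    _ = 1 := by field_simp
  set a : Fin k → ℝ := fun i => (i : ℕ) * p with ha
  have ha0 : ∀ i, 0 ≤ a i := fun i => mul_nonneg (Nat.cast_nonneg _) hp0
  have hap : ∀ i, a i + p ≤ 1 := by
    intro i
    have h1 : ((i : ℕ) : ℝ) + 1 ≤ (k : ℝ) := by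
      exact_mod_cast Nat.succ_le_of_lt i.isLt
    calc a i + p = (((i:ℕ):ℝ) + 1) * p := by rw [ha]; ring
    _ ≤ (k:ℝ) * p := mul_le_mul_of_nonneg_right h1 hp0
    _ ≤ 1 := hkp
  -- the uniform variable
  set φ : Ω → ℝ := NonatomicAux.phi P hP with hφ
  have hφm : Measurable φ := NonatomicAux.phi_measurable P hP
  haveI : IsProbabilityMeasure (P.map φ) := Measure.isProbabilityMeasure_map hφm.aemeasurable
  have hL : ∀ x, (P.map φ) (Iic x) = ENNReal.ofReal (min x 1) :=
    NonatomicAux.phi_map_Iic P hP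
  -- definitions of U and V
  set U : Fin k → Ω → ℝ := fun i => fun ω => NonatomicAux.wfun ν (a i) p (φ ω) with hU
  set V : Fin k → Ω → ℝ := fun i => fun ω => NonatomicAux.wfun (νB i) (a i) p (φ ω) with hV
  have hUwm : ∀ i, Measurable (NonatomicAux.wfun ν (a i) p) := fun i =>
    NonatomicAux.wfun_measurable (ha0 i) hp0 hmassν
  have hVwm : ∀ i, Measurable (NonatomicAux.wfun (νB i) (a i) p) := fun i =>
    NonatomicAux.wfun_measurable (ha0 i) hp0 (hmassνB i)
  have hUm : ∀ i, Measurable (U i) := fun i => (hUwm i).comp hφm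
  have hVm : ∀ i, Measurable (V i) := fun i => (hVwm i).comp hφm
  -- disjoint Ioc intervals
  have hIoc : ∀ i j : Fin k, i ≠ j → ∀ t : ℝ,
      t ∈ Ioc (a i) (a i + p) → t ∈ Ioc (a j) (a j + p) → False := by
    have key : ∀ i j : Fin k, (i : ℕ) < (j : ℕ) → ∀ t : ℝ,
        t ∈ Ioc (a i) (a i + p) → t ∈ Ioc (a j) (a j + p) → False := by
      intro i j hij t ⟨_, ht2⟩ ⟨ht3, _⟩
      have h1 : ((i:ℕ):ℝ) + 1 ≤ ((j:ℕ):ℝ) := by exact_mod_cast hij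
      have h2 : a i + p ≤ a j := by
        rw [ha]
        calc ((i:ℕ):ℝ) * p + p = (((i:ℕ):ℝ) + 1) * p := by ring
        _ ≤ ((j:ℕ):ℝ) * p := mul_le_mul_of_nonneg_right h1 hp0
      linarith
    intro i j hij t h1 h2
    rcases lt_or_gt_of_ne (fun h => hij (Fin.ext h) : (i:ℕ) ≠ (j:ℕ)) with h | h
    · exact key i j h t h1 h2
    · exact key j i h t h2 h1
  have hdisjU : ∀ (ρ₁ ρ₂ : Measure ℝ), ∀ i j : Fin k, i ≠ j → ∀ t : ℝ,
      NonatomicAux.wfun ρ₁ (a i) p t * NonatomicAux.wfun ρ₂ (a j) p t = 0 := by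
    intro ρ₁ ρ₂ i j hij t
    by_cases h1 : t ∈ Ioc (a i) (a i + p)
    · by_cases h2 : t ∈ Ioc (a j) (a j + p)
      · exact absurd (hIoc i j hij t h1 h2) not_false
      · rw [NonatomicAux.wfun_zero_outside t h2, mul_zero]
    · rw [NonatomicAux.wfun_zero_outside t h1, zero_mul]
  refine ⟨U, V, hUm, hVm, ?_, ?_, ?_, ?_, ?_, ?_, ?_⟩
  · exact fun i => ae_of_all _ fun ω => NonatomicAux.wfun_nonneg (ha0 i) (φ ω)
  · exact fun i => ae_of_all _ fun ω => NonatomicAux.wfun_nonneg (ha0 i) (φ ω)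
  · exact fun i j hij => ae_of_all _ fun ω => hdisjU ν ν i j hij (φ ω)
  · exact fun i j hij => ae_of_all _ fun ω => hdisjU (νB i) (νB j) i j hij (φ ω)
  · intro i
    refine ⟨(hUm i).aemeasurable, hfm, ?_⟩
    calc P.map (U i) = (P.map φ).map (NonatomicAux.wfun ν (a i) p) :=
          (Measure.map_map (hUwm i) hφm).symm
    _ = ν := NonatomicAux.wfun_map hL hνIio (ha0 i) hp0 (hap i) hmassν
  · intro i
    refine ⟨(hVm i).aemeasurable, hgm i, ?_⟩
    calc P.map (V i) = (P.map φ).map (NonatomicAux.wfun (νB i) (a i) p) :=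
          (Measure.map_map (hVwm i) hφm).symm
    _ = νB i := NonatomicAux.wfun_map hL (hνBIio i) (ha0 i) hp0 (hap i) (hmassνB i)
  · intro i
    exact ae_of_all _ fun ω => NonatomicAux.wfun_le_wfun (hcdfdom i) (φ ω)
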